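/- (Inductive amplitude form / Grover–Rudolph correctness) Let U := U_n U_{n−1} ⋯ U_1 be the Grover–Rudolph circuit. Then U|0⟩^{⊗n} = Σ_{z_1⋯z_n ∈ {0,1}^n} T_{z_1}(θ_{z_2⋯z_n}) ⋯ T_{z_{n−1}}(θ_{z_n}) T_{z_n}(θ_∅) |z_1⋯z_n⟩. Consequently the computational-basis measurement probability of outcome z_1⋯z_n equals p_{z_1⋯z_n}. -/
import Mathlib


/-- Entry of the real rotation `R(α)` (first column `(cos α, sin α)`), rows/cols indexed by bits. -/
noncomputable def Rent (α : ℝ) : Bool → Bool → ℂ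
  | false, false => Real.cos α
  | false, true => -Real.sin α
  | true, false => Real.sin α
  | true, true => Real.cos α

/-- `T z x = (cos x)^(1-z) (sin x)^z`. -/
noncomputable def Tbit (z : Bool) (x : ℝ) : ℝ := if z then Real.sin x else Real.cos x

/-- Bit `i` of a basis label `x : Fin n → Bool` (with `false` out of range). -/
def getBit {n : ℕ} (x : Fin n → Bool) (i : ℕ) : Bool :=
  if h : i < n then x ⟨i, h⟩ else false

/-- Stage `j` of the Grover--Rudolph circuit: the product over all control words
`w ∈ {0,1}^(j-1)` of the pattern-controlled rotations `CC^{(1)}_w(R(θ_w))`, acting on the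
active `j`-qubit register (target qubit index `n - j`, controls `n - j + 1, …, n - 1`). -/
noncomputable def stage (n : ℕ) (θ : (m : ℕ) → (Fin m → Bool) → ℝ) (j : ℕ) :
    Matrix (Fin n → Bool) (Fin n → Bool) ℂ :=
  fun x y =>
    if ∀ i : Fin n, (i : ℕ) ≠ n - j → x i = y i then
      Rent (θ (j - 1) (fun r : Fin (j - 1) => getBit y (n - j + 1 + (r : ℕ))))
        (getBit x (n - j)) (getBit y (n - j))
    else 0

/-- The Grover--Rudolph circuit `U = U_n U_{n-1} ⋯ U_1`. -/
noncomputable def GRcircuit (n : ℕ) (θ : (m : ℕ) → (Fin m → Bool) → ℝ) :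
    Matrix (Fin n → Bool) (Fin n → Bool) ℂ :=
  ((List.range n).map fun i => stage n θ (n - i)).prod

/-- The all-zeros basis state `|0⟩^{⊗ n}`. -/
def e0 (n : ℕ) : (Fin n → Bool) → ℂ := fun x => if x = fun _ => false then 1 else 0

/-- amplitude factor, using `getBit` to avoid dependent proofs -/
noncomputable def Fa (n : ℕ) (θ : (m : ℕ) → (Fin m → Bool) → ℝ) (x : Fin n → Bool) (r : Fin n) : ℂ :=
  ((Tbit (x r) (θ (n - 1 - (r : ℕ))
      (fun i : Fin (n - 1 - (r : ℕ)) => getBit x ((r : ℕ) + 1 + (i : ℕ)))) : ℝ) : ℂ)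

lemma Rent_false (α : ℝ) (b : Bool) : Rent α b false = ((Tbit b α : ℝ) : ℂ) := by
  cases b <;> rfl

lemma Fa_congr {n : ℕ} (θ : (m : ℕ) → (Fin m → Bool) → ℝ) {x y : Fin n → Bool} (r : Fin n)
    (h : ∀ j : Fin n, (r : ℕ) ≤ (j : ℕ) → x j = y j) : Fa n θ x r = Fa n θ y r := by
  unfold Fa
  rw [h r le_rfl]
  have hfun : (fun i : Fin (n - 1 - (r : ℕ)) => getBit x ((r : ℕ) + 1 + (i : ℕ)))
      = fun i : Fin (n - 1 - (r : ℕ)) => getBit y ((r : ℕ) + 1 + (i : ℕ)) := by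
    funext i
    unfold getBit
    split
    · next hlt => exact h ⟨_, hlt⟩ (by simp; omega)
    · rfl
  rw [hfun]

/-- the key invariant -/
lemma key (n : ℕ) (θ : (m : ℕ) → (Fin m → Bool) → ℝ) (k : ℕ) (hk : k ≤ n) (x : Fin n → Bool) :
    (((List.range k).map fun i => stage n θ (k - i)).prod).mulVec (e0 n) x =
    if ∀ i : Fin n, (i : ℕ) < n - k → x i = false then
      ∏ r ∈ Finset.univ.filter (fun r : Fin n => n - k ≤ (r : ℕ)), Fa n θ x r
    else 0 := by
  induction k generalizing x with
  | zero =>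
      simp only [List.range_zero, List.map_nil, List.prod_nil, Matrix.one_mulVec]
      have h1 : Finset.univ.filter (fun r : Fin n => n - 0 ≤ (r : ℕ)) = ∅ := by
        ext r
        simp only [Finset.mem_filter, Finset.mem_univ, true_and, Finset.notMem_empty, iff_false]
        omega
      rw [h1]
      simp only [Finset.prod_empty, e0]
      by_cases h : x = fun _ => false
      · rw [if_pos h, if_pos (by intro i _; rw [h])]
      · rw [if_neg h, if_neg (by
          intro hc
          exact h (funext fun i => hc i (by omega)))]

  | succ k ih =>
      have hk' : k ≤ n := by omega
      set t := n - (k + 1) with ht_def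
      have ht : t < n := by omega
      have hnk : n - k = t + 1 := by omega
      -- split off the first stage
      have hlist : ((List.range (k+1)).map fun i => stage n θ (k + 1 - i)).prod
          = stage n θ (k+1) * ((List.range k).map fun i => stage n θ (k - i)).prod := by
        rw [List.range_succ_eq_map, List.map_cons, List.map_map, List.prod_cons]
        have hfun : ((fun i => stage n θ (k + 1 - i)) ∘ Nat.succ)
            = fun i => stage n θ (k - i) := by
          funext i
          simp [Function.comp, Nat.succ_sub_succ]
        rw [hfun]
        norm_num
      rw [hlist, ← Matrix.mulVec_mulVec]
      set y0 := Function.update x ⟨t, ht⟩ false with hy0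
      have hsum : (stage n θ (k+1)).mulVec
            ((((List.range k).map fun i => stage n θ (k - i)).prod).mulVec (e0 n)) x
          = stage n θ (k+1) x y0
            * (((List.range k).map fun i => stage n θ (k - i)).prod).mulVec (e0 n) y0 := by
        simp only [Matrix.mulVec, dotProduct]
        apply Finset.sum_eq_single
        · intro y _ hy
          by_cases hagree : ∀ i : Fin n, (i : ℕ) ≠ n - (k+1) → x i = y i
          · rcases Bool.eq_false_or_eq_true (y ⟨t, ht⟩) with hb | hb
            swap
            · exfalso
              apply hy
              funext i
              by_cases hi : i = ⟨t, ht⟩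
              · subst hi
                rw [hb, hy0, Function.update_self]
              · rw [hy0, Function.update_of_ne hi]
                exact (hagree i (by simpa [Fin.ext_iff] using hi)).symm
            · have hvy : (((List.range k).map fun i => stage n θ (k - i)).prod).mulVec (e0 n) y
                  = 0 := by
                rw [ih hk', if_neg]
                intro hc
                have := hc ⟨t, ht⟩ (by simp; omega)
                rw [hb] at this; exact Bool.noConfusion this
              simp only [Matrix.mulVec, dotProduct] at hvy
              rw [hvy, mul_zero]
          · rw [stage, if_neg hagree, zero_mul]
        · intro h; exact absurd (Finset.mem_univ y0) h
      rw [hsum]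
      -- compute stage entry at y0
      have hx_agree : ∀ i : Fin n, (i : ℕ) ≠ n - (k+1) → x i = y0 i := by
        intro i hi
        rw [hy0, Function.update_of_ne (by simpa [Fin.ext_iff] using hi)]
      have hy0t : getBit y0 t = false := by
        unfold getBit
        rw [dif_pos ht]
        exact Function.update_self _ _ _
      have hgetx : getBit x t = x ⟨t, ht⟩ := by unfold getBit; rw [dif_pos ht]
      have hctrl : ∀ i : ℕ, t < i → getBit y0 i = getBit x i := by
        intro i hi
        unfold getBit
        split
        · next hlt =>
            rw [hy0, Function.update_of_ne (by simp [Fin.ext_iff]; omega)]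
        · rfl
      have hstage : stage n θ (k+1) x y0
          = Rent (θ k (fun r : Fin k => getBit x (t + 1 + (r : ℕ)))) (x ⟨t, ht⟩) false := by
        rw [stage, if_pos hx_agree]
        have h1 : n - (k+1) = t := ht_def.symm
        rw [h1, hy0t, hgetx]
        congr 1
        congr 1
        funext r
        exact hctrl _ (by omega)
      -- compute v y0 via ih
      rw [ih hk']
      have hcond : (∀ i : Fin n, (i : ℕ) < n - k → y0 i = false)
          ↔ (∀ i : Fin n, (i : ℕ) < n - (k+1) → x i = false) := by
        constructor
        · intro h i hi
          have := h i (by omega)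
          rwa [hy0, Function.update_of_ne (by simp [Fin.ext_iff]; omega)] at this
        · intro h i hi
          by_cases hit : i = ⟨t, ht⟩
          · subst hit; rw [hy0]; exact Function.update_self _ _ _
          · rw [hy0, Function.update_of_ne hit]
            exact h i (by
              have : (i : ℕ) ≠ t := by simpa [Fin.ext_iff] using hit
              omega)
      by_cases hc : ∀ i : Fin n, (i : ℕ) < n - (k+1) → x i = false
      · rw [if_pos (hcond.mpr hc), if_pos hc]
        have hprod : ∏ r ∈ Finset.univ.filter (fun r : Fin n => n - k ≤ (r : ℕ)), Fa n θ y0 r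
            = ∏ r ∈ Finset.univ.filter (fun r : Fin n => n - k ≤ (r : ℕ)), Fa n θ x r := by
          apply Finset.prod_congr rfl
          intro r hr
          simp only [Finset.mem_filter] at hr
          apply Fa_congr
          intro j hj
          exact (hx_agree j (by omega)).symm
        rw [hstage, hprod, Rent_false]
        -- now show Tbit term = Fa x ⟨t, ht⟩ and combine product
        have hFa : Fa n θ x ⟨t, ht⟩
            = ((Tbit (x ⟨t, ht⟩) (θ k (fun r : Fin k => getBit x (t + 1 + (r : ℕ)))) : ℝ) : ℂ) := by
          have hm : n - 1 - t = k := by omega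
          have key2 : ∀ (m : ℕ), m = k →
              θ m (fun i : Fin m => getBit x (t + 1 + (i : ℕ)))
                = θ k (fun i : Fin k => getBit x (t + 1 + (i : ℕ))) := by
            intro m hm'; subst hm'; rfl
          unfold Fa
          simp only [Fin.val_mk]
          rw [key2 _ hm]
        have hins : Finset.univ.filter (fun r : Fin n => n - (k+1) ≤ (r : ℕ))
            = insert ⟨t, ht⟩ (Finset.univ.filter (fun r : Fin n => n - k ≤ (r : ℕ))) := by
          ext r
          simp [Fin.ext_iff]
          omega
        rw [hins, Finset.prod_insert (by simp; omega), hFa]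
      · rw [if_neg (fun h => hc (hcond.mp h)), if_neg hc, mul_zero]


/-- scalar telescoping step -/
lemma Tsq {n : ℕ} (p θ : (m : ℕ) → (Fin m → Bool) → ℝ)
    (hp_nonneg : ∀ m, m ≤ n → ∀ w : Fin m → Bool, 0 ≤ p m w)
    (hp_refine : ∀ m, m < n → ∀ w : Fin m → Bool,
      p m w = p (m + 1) (Fin.cons false w) + p (m + 1) (Fin.cons true w))
    (hθ_pos : ∀ m, m < n → ∀ w : Fin m → Bool, 0 < p m w →
      Real.cos (θ m w) ^ 2 = p (m + 1) (Fin.cons false w) / p m w ∧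
      Real.sin (θ m w) ^ 2 = p (m + 1) (Fin.cons true w) / p m w)
    (m : ℕ) (hm : m < n) (w : Fin m → Bool) (b : Bool) :
    (Tbit b (θ m w)) ^ 2 * p m w = p (m + 1) (Fin.cons b w) := by
  rcases eq_or_lt_of_le (hp_nonneg m (le_of_lt hm) w) with h0 | hpos
  · have hz : p m w = 0 := h0.symm
    have href := hp_refine m hm w
    have ha := hp_nonneg (m+1) (by omega) (Fin.cons false w)
    have hb := hp_nonneg (m+1) (by omega) (Fin.cons true w)
    have h0f : p (m+1) (Fin.cons false w) = 0 := by linarith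
    have h0t : p (m+1) (Fin.cons true w) = 0 := by linarith
    cases b
    · rw [hz, mul_zero, h0f]
    · rw [hz, mul_zero, h0t]
  · obtain ⟨hc, hs⟩ := hθ_pos m hm w hpos
    cases b
    · show (Real.cos (θ m w)) ^ 2 * p m w = _
      rw [hc, div_mul_cancel₀ _ (ne_of_gt hpos)]
    · show (Real.sin (θ m w)) ^ 2 * p m w = _
      rw [hs, div_mul_cancel₀ _ (ne_of_gt hpos)]

/-- probability telescoping -/
lemma tele (n : ℕ) (p θ : (m : ℕ) → (Fin m → Bool) → ℝ)
    (hp_nonneg : ∀ m, m ≤ n → ∀ w : Fin m → Bool, 0 ≤ p m w)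
    (hp_root : ∀ w : Fin 0 → Bool, p 0 w = 1)
    (hp_refine : ∀ m, m < n → ∀ w : Fin m → Bool,
      p m w = p (m + 1) (Fin.cons false w) + p (m + 1) (Fin.cons true w))
    (hθ_pos : ∀ m, m < n → ∀ w : Fin m → Bool, 0 < p m w →
      Real.cos (θ m w) ^ 2 = p (m + 1) (Fin.cons false w) / p m w ∧
      Real.sin (θ m w) ^ 2 = p (m + 1) (Fin.cons true w) / p m w)
    (z : Fin n → Bool) :
    ∀ m, m ≤ n →
      ∏ r ∈ Finset.univ.filter (fun r : Fin n => n - m ≤ (r : ℕ)),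
        (Tbit (z r) (θ (n - 1 - (r : ℕ))
          (fun i : Fin (n - 1 - (r : ℕ)) => getBit z ((r : ℕ) + 1 + (i : ℕ))))) ^ 2
      = p m (fun i : Fin m => getBit z (n - m + (i : ℕ))) := by
  intro m
  induction m with
  | zero =>
      intro _
      have h1 : Finset.univ.filter (fun r : Fin n => n - 0 ≤ (r : ℕ)) = ∅ := by
        ext r
        simp only [Finset.mem_filter, Finset.mem_univ, true_and, Finset.notMem_empty, iff_false]
        omega
      rw [h1, Finset.prod_empty, hp_root]
  | succ m ih =>
      intro hm
      set t := n - (m + 1) with ht_def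
      have ht : t < n := by omega
      have hins : Finset.univ.filter (fun r : Fin n => n - (m + 1) ≤ (r : ℕ))
          = insert ⟨t, ht⟩ (Finset.univ.filter (fun r : Fin n => n - m ≤ (r : ℕ))) := by
        ext r
        simp [Fin.ext_iff]
        omega
      rw [hins, Finset.prod_insert (by simp; omega), ih (by omega)]
      have hw : (fun i : Fin m => getBit z (n - m + (i : ℕ)))
          = fun i : Fin m => getBit z (t + 1 + (i : ℕ)) := by
        funext i; congr 1; omega
      rw [hw]
      have hmeq : n - 1 - t = m := by omega
      have key2 : ∀ (m' : ℕ), m' = m →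
          θ m' (fun i : Fin m' => getBit z (t + 1 + (i : ℕ)))
            = θ m (fun i : Fin m => getBit z (t + 1 + (i : ℕ))) := by
        intro m' hm'; subst hm'; rfl
      simp only [Fin.val_mk]
      rw [key2 _ hmeq, Tsq p θ hp_nonneg hp_refine hθ_pos m (by omega)]
      congr 1
      funext i
      induction i using Fin.cases with
      | zero =>
          simp only [Fin.cons_zero, Fin.val_zero, Nat.add_zero]
          unfold getBit
          rw [dif_pos (show n - (m+1) < n by omega)]
      | succ j =>
          simp only [Fin.cons_succ, Fin.val_succ]
          congr 1
          omega

theorem grover_rudolph_correctness (n : ℕ) (hn : 1 ≤ n)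
    (p : (m : ℕ) → (Fin m → Bool) → ℝ)
    (θ : (m : ℕ) → (Fin m → Bool) → ℝ)
    (hp_nonneg : ∀ m, m ≤ n → ∀ w : Fin m → Bool, 0 ≤ p m w)
    (hp_root : ∀ w : Fin 0 → Bool, p 0 w = 1)
    (hp_refine : ∀ m, m < n → ∀ w : Fin m → Bool,
      p m w = p (m + 1) (Fin.cons false w) + p (m + 1) (Fin.cons true w))
    (hθ_range : ∀ m, m < n → ∀ w : Fin m → Bool, θ m w ∈ Set.Icc 0 (Real.pi / 2))
    (hθ_pos : ∀ m, m < n → ∀ w : Fin m → Bool, 0 < p m w →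
      Real.cos (θ m w) ^ 2 = p (m + 1) (Fin.cons false w) / p m w ∧
      Real.sin (θ m w) ^ 2 = p (m + 1) (Fin.cons true w) / p m w)
    (hθ_zero : ∀ m, m < n → ∀ w : Fin m → Bool, p m w = 0 → θ m w = 0) :
    ∀ z : Fin n → Bool,
      (GRcircuit n θ).mulVec (e0 n) z
        = ∏ r : Fin n,
            ((Tbit (z r) (θ (n - 1 - (r : ℕ))
              (fun i : Fin (n - 1 - (r : ℕ)) => z ⟨(r : ℕ) + 1 + (i : ℕ), by omega⟩)) : ℝ) : ℂ)
      ∧ ‖(GRcircuit n θ).mulVec (e0 n) z‖ ^ 2 = p n z := by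
  intro z
  have hfilter : Finset.univ.filter (fun r : Fin n => n - n ≤ (r : ℕ)) = Finset.univ := by
    ext r; simp
  have hamp : (GRcircuit n θ).mulVec (e0 n) z = ∏ r : Fin n, Fa n θ z r := by
    rw [GRcircuit, key n θ n le_rfl z, if_pos (fun i hi => absurd hi (by omega)), hfilter]
  have hFa_eq : ∀ r : Fin n, Fa n θ z r
      = ((Tbit (z r) (θ (n - 1 - (r : ℕ))
          (fun i : Fin (n - 1 - (r : ℕ)) => z ⟨(r : ℕ) + 1 + (i : ℕ), by omega⟩)) : ℝ) : ℂ) := by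
    intro r
    unfold Fa
    have hfun : (fun i : Fin (n - 1 - (r : ℕ)) => getBit z ((r : ℕ) + 1 + (i : ℕ)))
        = fun i : Fin (n - 1 - (r : ℕ)) => z ⟨(r : ℕ) + 1 + (i : ℕ), by omega⟩ := by
      funext i
      unfold getBit
      rw [dif_pos (show (r : ℕ) + 1 + (i : ℕ) < n by omega)]
    rw [hfun]
  constructor
  · rw [hamp]
    exact Finset.prod_congr rfl fun r _ => hFa_eq r
  · rw [hamp]
    have h1 : ‖∏ r : Fin n, Fa n θ z r‖ ^ 2
        = ∏ r : Fin n, (Tbit (z r) (θ (n - 1 - (r : ℕ))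
            (fun i : Fin (n - 1 - (r : ℕ)) => getBit z ((r : ℕ) + 1 + (i : ℕ))))) ^ 2 := by
      rw [norm_prod, ← Finset.prod_pow]
      apply Finset.prod_congr rfl
      intro r _
      unfold Fa
      rw [Complex.norm_real, Real.norm_eq_abs, sq_abs]
    rw [h1]
    have h2 := tele n p θ hp_nonneg hp_root hp_refine hθ_pos z n le_rfl
    rw [hfilter] at h2
    rw [h2]
    congr 1
    funext i
    unfold getBit
    rw [dif_pos (show n - n + (i : ℕ) < n by omega)]
    congr 1
    exact Fin.ext (by simp)
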